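/- arXiv:1711.07756 — 4 statements merged into one kernel-verified Lean document; each statement's English description precedes it below -/
import Mathlib

section
/- Let $p$ be a prime, $u \geq 1$, and $G = G_1 \times \cdots \times G_u$ a product of finite simple non-abelian quasi $p$-groups. Let $Q \leq G$ be a $p$-subgroup whose $G$-conjugates generate $G$. If $u \leq p$, then there exists $g \in Q$ such that every component $g^{(i)}$ of $g$ is nontrivial, for $1 \leq i \leq u$. -/
/-- Let `G = G₁ × ⋯ × G_u` be a product of finite simple non-abelian quasi
`p`-groups, and `Q ≤ G` a `p`-subgroup whose conjugates generate `G`.  If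
`u ≤ p`, then some `g ∈ Q` has all of its components nontrivial. -/
theorem exists_full_support_element (p u : ℕ) [Fact p.Prime] (hu : 1 ≤ u) (hup : u ≤ p)
    (G : Fin u → Type*) [∀ i, Group (G i)] [∀ i, Finite (G i)]
    [∀ i, IsSimpleGroup (G i)] (hnonab : ∀ i, ∃ a b : G i, a * b ≠ b * a)
    (hquasi : ∀ i, (⨆ P : Sylow p (G i), (P : Subgroup (G i))) = ⊤)
    (Q : Subgroup (∀ i, G i)) (hQp : IsPGroup p Q)
    (hQgen : Subgroup.normalClosure (Q : Set (∀ i, G i)) = ⊤) :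
    ∃ g ∈ Q, ∀ i, g i ≠ 1 := by
  classical
  have hp2 : 2 ≤ p := (Fact.out : p.Prime).two_le
  -- Step 1: each coordinate projection of Q is nontrivial
  have hproj : ∀ i, ∃ q ∈ Q, q i ≠ 1 := by
    intro i
    by_contra h
    push_neg at h
    have hQle : Q ≤ (Pi.evalMonoidHom G i).ker := by
      intro q hq
      exact h q hq
    have hle : Subgroup.normalClosure (Q : Set (∀ i, G i)) ≤ (Pi.evalMonoidHom G i).ker :=
      Subgroup.normalClosure_le_normal hQle
    rw [hQgen] at hle
    obtain ⟨a, b, hab⟩ := hnonab i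
    have ha : a ≠ 1 := by rintro rfl; simp at hab
    have hmem := hle (Subgroup.mem_top (Pi.mulSingle i a))
    rw [MonoidHom.mem_ker] at hmem
    simp [Pi.evalMonoidHom] at hmem
    exact ha hmem
  by_contra hcon
  push_neg at hcon
  haveI : Fintype (∀ i, G i) := Fintype.ofFinite _
  haveI : Fintype ↥Q := Fintype.ofFinite _
  set K : Fin u → Subgroup ↥Q := fun i => ((Pi.evalMonoidHom G i).comp Q.subtype).ker with hK
  have hmemK : ∀ (i : Fin u) (q : ↥Q), q ∈ K i ↔ (q : ∀ j, G j) i = 1 := by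
    intro i q
    simp [hK, MonoidHom.mem_ker, Pi.evalMonoidHom]
  obtain ⟨n, hn⟩ := (IsPGroup.iff_card).mp hQp
  -- each K i is proper
  have hKne : ∀ i, K i ≠ ⊤ := by
    intro i htop
    obtain ⟨q, hq, hqi⟩ := hproj i
    have : (⟨q, hq⟩ : ↥Q) ∈ K i := htop ▸ Subgroup.mem_top _
    exact hqi ((hmemK i ⟨q, hq⟩).mp this)
  have hdvd : ∀ i, Nat.card (K i) ∣ p ^ n := by
    intro i
    rw [← hn]
    exact Subgroup.card_subgroup_dvd_card (K i)
  have hn1 : 1 ≤ n := by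
    by_contra hn0
    push_neg at hn0
    interval_cases n
    apply hKne ⟨0, hu⟩
    apply Subgroup.eq_top_of_card_eq
    rw [hn, pow_zero]
    exact Nat.eq_one_of_dvd_one (by simpa using hdvd ⟨0, hu⟩)
  -- card bound on each K i
  have hKcard : ∀ i, Nat.card (K i) ≤ p ^ (n - 1) := by
    intro i
    obtain ⟨m, hm, hcm⟩ := (Nat.dvd_prime_pow (Fact.out : p.Prime)).mp (hdvd i)
    have hmn : m < n := by
      rcases lt_or_eq_of_le hm with h | h
      · exact h
      · exfalso
        apply hKne i
        apply Subgroup.eq_top_of_card_eq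
        rw [hcm, h, hn]
    rw [hcm]
    exact Nat.pow_le_pow_right (Fact.out : p.Prime).pos (by omega)
  -- covering
  have hcover : (Finset.univ.erase (1 : ↥Q)) ⊆
      Finset.univ.biUnion (fun i => ((K i : Set ↥Q).toFinset.erase 1)) := by
    intro q hq
    rw [Finset.mem_erase] at hq
    obtain ⟨i, hi⟩ := hcon q q.2
    refine Finset.mem_biUnion.mpr ⟨i, Finset.mem_univ _, ?_⟩
    rw [Finset.mem_erase, Set.mem_toFinset]
    exact ⟨hq.1, (hmemK i q).mpr hi⟩
  have hcard1 : (Finset.univ.erase (1 : ↥Q)).card = p ^ n - 1 := by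
    rw [Finset.card_erase_of_mem (Finset.mem_univ _), Finset.card_univ,
      ← Nat.card_eq_fintype_card, hn]
  have hcard2 : (Finset.univ.biUnion (fun i => ((K i : Set ↥Q).toFinset.erase 1))).card
      ≤ u * (p ^ (n - 1) - 1) := by
    refine le_trans (Finset.card_biUnion_le) ?_
    have hsb : ∀ i : Fin u, ((K i : Set ↥Q).toFinset.erase 1).card ≤ p ^ (n - 1) - 1 := by
      intro i
      have h1 : ((K i : Set ↥Q).toFinset).card = Nat.card (K i) := by
        rw [Set.toFinset_card]; exact (Nat.card_eq_fintype_card).symm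
      have h2 : (1 : ↥Q) ∈ (K i : Set ↥Q).toFinset := by
        rw [Set.mem_toFinset]; exact (K i).one_mem
      rw [Finset.card_erase_of_mem h2, h1]
      exact Nat.sub_le_sub_right (hKcard i) 1
    calc ∑ i : Fin u, ((K i : Set ↥Q).toFinset.erase 1).card
        ≤ ∑ _i : Fin u, (p ^ (n - 1) - 1) := Finset.sum_le_sum fun i _ => hsb i
      _ = u * (p ^ (n - 1) - 1) := by rw [Finset.sum_const, Finset.card_univ,
          Fintype.card_fin, smul_eq_mul]
  have hmain : p ^ n - 1 ≤ u * (p ^ (n - 1) - 1) :=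
    hcard1 ▸ le_trans (Finset.card_le_card hcover) hcard2
  -- final contradiction
  have hx : 1 ≤ p ^ (n - 1) := Nat.one_le_pow _ _ (Fact.out : p.Prime).pos
  have h3 : u * (p ^ (n - 1) - 1) ≤ p * (p ^ (n - 1) - 1) := Nat.mul_le_mul_right _ hup
  have h4 : p * (p ^ (n - 1) - 1) = p * p ^ (n - 1) - p := by rw [Nat.mul_sub, mul_one]
  have h6 : p * p ^ (n - 1) = p ^ n := by
    rw [← pow_succ']
    congr 1
    omega
  have h5 : p ≤ p ^ n := by
    calc p = p ^ 1 := (pow_one p).symm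
    _ ≤ p ^ n := Nat.pow_le_pow_right (Fact.out : p.Prime).pos hn1
  omega
end

section
/- Let $p$ be an odd prime, $a \geq 3$ an integer, $d = ap$, and $j = \frac{p-1}{\gcd(p-1, d+1)}$. Then there exists an integer $s$ with $1 \leq s \leq p-1$ such that $s$ divides $j$ and $\gcd(j, d-p-s) = 1$. -/
/-- Let `p` be an odd prime, `a ≥ 3`, `d = ap` and `j = (p-1)/gcd(p-1, d+1)`.
Then there is `1 ≤ s ≤ p-1` with `s ∣ j` and `gcd(j, d - p - s) = 1`. -/
theorem exists_s_dividing (p a d j : ℕ) (hp : p.Prime) (hodd : Odd p) (ha : 3 ≤ a)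
    (hd : d = a * p) (hj : j = (p - 1) / Nat.gcd (p - 1) (d + 1)) :
    ∃ s : ℕ, 1 ≤ s ∧ s ≤ p - 1 ∧ s ∣ j ∧ Nat.gcd j (d - p - s) = 1 := by
  have hp2 : 2 ≤ p := hp.two_le
  set c := d - p with hc
  have hcge : 2 * p ≤ c := by
    have : 3 * p ≤ a * p := Nat.mul_le_mul_right p ha
    omega
  -- j is positive and at most p - 1
  have hgdvd : Nat.gcd (p - 1) (d + 1) ∣ (p - 1) := Nat.gcd_dvd_left _ _
  have hgpos : 0 < Nat.gcd (p - 1) (d + 1) :=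
    Nat.gcd_pos_of_pos_left _ (by omega)
  have hjpos : 0 < j := by
    rw [hj]; exact Nat.div_pos (Nat.le_of_dvd (by omega) hgdvd) hgpos
  have hjle : j ≤ p - 1 := by rw [hj]; exact Nat.le_trans (Nat.div_le_self _ _) le_rfl
  -- the candidate s
  set s := ∏ q ∈ j.primeFactors.filter (fun q => ¬ q ∣ c), q with hs
  have hsdvd : s ∣ j := by
    refine dvd_trans ?_ (Nat.prod_primeFactors_dvd j)
    exact Finset.prod_dvd_prod_of_subset _ _ _ (Finset.filter_subset _ _)
  have hspos : 0 < s := by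
    refine Finset.prod_pos fun q hq => ?_
    exact (Nat.prime_of_mem_primeFactors (Finset.mem_of_mem_filter q hq)).pos
  have hsle : s ≤ j := Nat.le_of_dvd hjpos hsdvd
  have hslec : s ≤ c := by omega
  refine ⟨s, hspos, le_trans hsle hjle, hsdvd, ?_⟩
  by_contra hne
  have hgpos2 : 0 < Nat.gcd j (c - s) := Nat.gcd_pos_of_pos_left _ hjpos
  set q := (Nat.gcd j (c - s)).minFac with hqdef
  have hq : q.Prime := Nat.minFac_prime hne
  have hqg : q ∣ Nat.gcd j (c - s) := Nat.minFac_dvd _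
  have hqj : q ∣ j := hqg.trans (Nat.gcd_dvd_left _ _)
  have hqcs : q ∣ c - s := hqg.trans (Nat.gcd_dvd_right _ _)
  by_cases hqc : q ∣ c
  · -- then q ∣ s, but s is a product of primes not dividing c
    have hqs : q ∣ s := by
      have := Nat.dvd_sub hqc hqcs
      rwa [Nat.sub_sub_self hslec] at this
    have := (Prime.dvd_finset_prod_iff hq.prime _).mp hqs
    obtain ⟨r, hr, hqr⟩ := this
    obtain ⟨hr1, hr2⟩ := Finset.mem_filter.mp hr
    have hrp : r.Prime := Nat.prime_of_mem_primeFactors hr1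
    have : q = r := (Nat.prime_dvd_prime_iff_eq hq hrp).mp hqr
    exact hr2 (this ▸ hqc)
  · -- then q ∣ s since q is in the product
    have hmem : q ∈ j.primeFactors.filter (fun q => ¬ q ∣ c) := by
      refine Finset.mem_filter.mpr ⟨?_, hqc⟩
      exact Nat.mem_primeFactors.mpr ⟨hq, hqj, by omega⟩
    have hqs : q ∣ s := Finset.dvd_prod_of_mem _ hmem
    have : q ∣ c := by
      have := Nat.dvd_add hqcs hqs
      rwa [Nat.sub_add_cancel hslec] at this
    exact hqc this
end

section
/- Let $k$ be a field of characteristic $p > 0$, $p$ odd, $d = ap$ with $a \geq 3$, and let $1 \leq s \leq p-1$. Set $h(y) = 1 + y^{d-s}(y+1)^s \in k[y]$ and $f(x,y) = h(y) - x\, y^{d-p-s}(y+1)^s \in k[x,y]$. Then the polynomials $f$ and $\partial f/\partial y$ (as polynomials in $y$ over $k(x)$, for any specialization of $x$ in an algebraic closure) have no common zero $(a_0,b_0)$ with $b_0$ in an algebraic closure of $k$; equivalently, the identity $s\, h(y) + y(y+1)h'(y) = s$ holds in $k[y]$. -/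
open Polynomial

lemma deriv_aux {R : Type*} [CommRing R] (n m : ℕ) (hn : 1 ≤ n) (hm : 1 ≤ m) :
    X * (X + 1) * derivative (X ^ n * (X + 1) ^ m : R[X]) =
      (C (n : R) * (X + 1) + C (m : R) * X) * (X ^ n * (X + 1) ^ m) := by
  obtain ⟨n', rfl⟩ : ∃ n', n = n' + 1 := ⟨n - 1, (Nat.succ_pred_eq_of_pos hn).symm⟩
  obtain ⟨m', rfl⟩ : ∃ m', m = m' + 1 := ⟨m - 1, (Nat.succ_pred_eq_of_pos hm).symm⟩
  rw [derivative_mul, derivative_pow, derivative_pow]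
  simp only [derivative_add, derivative_X, derivative_one, add_zero, mul_one,
    Nat.add_sub_cancel, Nat.cast_add, Nat.cast_one, map_add, map_one]
  simp only [pow_succ]
  ring

lemma key_id {K : Type*} [Field K] (s n : ℕ) (hn1 : 1 ≤ n) (hs1 : 1 ≤ s)
    (hcast : ((n : K)) = -(s : K)) :
    C (s : K) * (X ^ n * (X + 1) ^ s) + X * (X + 1) * derivative (X ^ n * (X + 1) ^ s) = 0 := by
  rw [deriv_aux n s hn1 hs1, hcast, map_neg]
  ring

lemma cast_sub_eq_neg {K : Type*} [Field K] (p : ℕ) [CharP K p] (n s : ℕ)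
    (hle : s ≤ n) (hdvd : p ∣ n) : ((n - s : ℕ) : K) = -(s : K) := by
  rw [Nat.cast_sub hle, (CharP.cast_eq_zero_iff K p n).2 hdvd, zero_sub]

/-- Let `char k = p` odd, `d = ap`, `a ≥ 3`, `1 ≤ s ≤ p-1`,
`h(y) = 1 + y^{d-s}(y+1)^s` and `f(x,y) = h(y) - x·y^{d-p-s}(y+1)^s`.  Then `f`
and `∂f/∂y` have no common zero over an algebraic closure of `k`; equivalently
the identity `s·h(y) + y(y+1)h'(y) = s` holds in `k[y]`. -/
theorem no_common_zero_of_f_and_fy (p a d s : ℕ) (hp : p.Prime) (hodd : Odd p)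
    (ha : 3 ≤ a) (hd : d = a * p) (hs1 : 1 ≤ s) (hs2 : s ≤ p - 1)
    (k : Type*) [Field k] [CharP k p] :
    (C (s : k) * (1 + X ^ (d - s) * (X + 1) ^ s) +
        X * (X + 1) * derivative (1 + X ^ (d - s) * (X + 1) ^ s) = C (s : k)) ∧
    (∀ a₀ : AlgebraicClosure k,
      ¬ ∃ b₀ : AlgebraicClosure k,
        ((1 + X ^ (d - s) * (X + 1) ^ s -
            C a₀ * X ^ (d - p - s) * (X + 1) ^ s : Polynomial (AlgebraicClosure k)).eval b₀ = 0 ∧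
         (derivative (1 + X ^ (d - s) * (X + 1) ^ s -
            C a₀ * X ^ (d - p - s) * (X + 1) ^ s : Polynomial (AlgebraicClosure k))).eval b₀ = 0)) := by
  have hp2 : 2 ≤ p := hp.two_le
  have hd3 : 3 * p ≤ d := by rw [hd]; nlinarith
  have hsp : s < p := by omega
  have hsd : s ≤ d := by omega
  have hn1 : 1 ≤ d - s := by omega
  have hn2 : 1 ≤ d - p - s := by omega
  have hdvd_d : p ∣ d := hd ▸ dvd_mul_left p a
  have hdvd_dp : p ∣ d - p := Nat.dvd_sub hdvd_d dvd_rfl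
  have hspd : s ≤ d - p := by omega
  have hnds : ¬ p ∣ s := Nat.not_dvd_of_pos_of_lt hs1 hsp
  constructor
  · have e1 := key_id (K := k) s (d - s) hn1 hs1 (cast_sub_eq_neg p d s hsd hdvd_d)
    rw [derivative_add, derivative_one]
    linear_combination e1
  · intro a₀
    rintro ⟨b₀, hf, hf'⟩
    haveI : CharP (AlgebraicClosure k) p :=
      charP_of_injective_algebraMap (algebraMap k (AlgebraicClosure k)).injective p
    have e1 := key_id (K := AlgebraicClosure k) s (d - s) hn1 hs1
      (cast_sub_eq_neg p d s hsd hdvd_d)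
    have e2 := key_id (K := AlgebraicClosure k) s (d - p - s) hn2 hs1
      (cast_sub_eq_neg p (d - p) s hspd hdvd_dp)
    have main : C ((s : AlgebraicClosure k)) *
          (1 + X ^ (d - s) * (X + 1) ^ s - C a₀ * X ^ (d - p - s) * (X + 1) ^ s) +
        X * (X + 1) * derivative (1 + X ^ (d - s) * (X + 1) ^ s -
          C a₀ * X ^ (d - p - s) * (X + 1) ^ s) = C ((s : AlgebraicClosure k)) := by
      rw [derivative_sub, derivative_add, derivative_one, mul_assoc (C a₀), derivative_C_mul]
      linear_combination e1 - C a₀ * e2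
    have heval := congrArg (eval b₀) main
    simp only [eval_add, eval_mul, eval_C, eval_X, hf, hf', mul_zero, add_zero,
      zero_add] at heval
    exact hnds ((CharP.cast_eq_zero_iff (AlgebraicClosure k) p s).1 heval.symm)
end

section
/- Let $k$ be an algebraically closed field of characteristic $p > 0$, let $f(y) = x_0(1 + y^{d-s}(y+1)^s) - y^{d-p-s}(y+1)^s \in k[[x_0]][y]$ where $p$ is odd, $d = ap$, $a \geq 3$, $1 \leq s \leq p-1$. Suppose $f = g \cdot h_1 \cdot h_2$ in $k[[x_0]][y]$ with $g \equiv -1 \pmod{x_0}$ of degree $p$, $h_1 \equiv y^{d-p-s} \pmod{x_0}$ of degree $d-p-s$, and $h_2 \equiv (y+1)^s \pmod{x_0}$ of degree $s$. Then $h_1$ is an Eisenstein polynomial with respect to the maximal ideal $(x_0)$ of $k[[x_0]]$: its leading coefficient is a unit, all lower coefficients lie in $(x_0)$, and its constant coefficient has $x_0$-valuation exactly $1$. -/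
open Polynomial

/-!
Reducing modulo `x₀` turns `h₁` into `y ^ (d - p - s)`, so every coefficient of `h₁` other than
the leading one lies in `(x₀)`, and the leading one is a unit. At `y = 0` the factorization reads
`x₀ = g(0) h₁(0) h₂(0)`, where `g(0) ≡ -1` and `h₂(0) ≡ 1` are units; so `h₁(0)` is associated
to `x₀` and has valuation exactly `1`.
-/

section PowerSeriesPolynomial

variable {R : Type*} [CommRing R]

theorem isUnit_coeff_of_isUnit_coeff_map_constantCoeff {q : (PowerSeries R)[X]} {n : ℕ}
    (h : IsUnit ((q.map PowerSeries.constantCoeff).coeff n)) : IsUnit (q.coeff n) := by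
  rwa [PowerSeries.isUnit_iff_constantCoeff, ← coeff_map]

theorem coeff_mem_span_X_of_map_constantCoeff_eq_X_pow {q : (PowerSeries R)[X]} {m n : ℕ}
    (hq : q.map PowerSeries.constantCoeff = X ^ m) (hn : n ≠ m) :
    q.coeff n ∈ Ideal.span {(PowerSeries.X : PowerSeries R)} := by
  rw [Ideal.mem_span_singleton, PowerSeries.X_dvd_iff, ← coeff_map, hq, coeff_X_pow, if_neg hn]

end PowerSeriesPolynomial

theorem coeff_zero_C_mul_one_add_X_pow_mul_sub_X_pow_mul {R : Type*} [CommRing R] (c : R)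
    {m n : ℕ} (hm : m ≠ 0) (hn : n ≠ 0) (s : ℕ) :
    (C c * (1 + X ^ m * (X + 1) ^ s) - X ^ n * (X + 1) ^ s : R[X]).coeff 0 = c := by
  simp [coeff_zero_eq_eval_zero, hm, hn]

theorem notMem_span_singleton_sq_of_associated {R : Type*} [CommSemiring R] [IsCancelMulZero R]
    {x c : R} (hx₀ : x ≠ 0) (hx : ¬IsUnit x) (hc : Associated c x) :
    c ∉ Ideal.span {x} ^ 2 := by
  rw [Ideal.span_singleton_pow, Ideal.mem_span_singleton, hc.dvd_iff_dvd_right]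
  nth_rw 2 [← pow_one x]
  rw [pow_dvd_pow_iff hx₀ hx]
  omega

theorem hensel_factor_eisenstein_general (p a d s : ℕ)
    (ha : 3 ≤ a) (hd : d = a * p) (hs1 : 1 ≤ s) (hs2 : s ≤ p - 1)
    (k : Type*) [Field k]
    (g h₁ h₂ : Polynomial (PowerSeries k))
    (hf : (C PowerSeries.X * (1 + X ^ (d - s) * (X + 1) ^ s) -
        X ^ (d - p - s) * (X + 1) ^ s : Polynomial (PowerSeries k)) = g * h₁ * h₂)
    (hg : g.map (PowerSeries.constantCoeff : PowerSeries k →+* k) = -1)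
    (hh₁ : h₁.map (PowerSeries.constantCoeff : PowerSeries k →+* k) = X ^ (d - p - s))
    (hh₁deg : h₁.natDegree = d - p - s)
    (hh₂ : h₂.map (PowerSeries.constantCoeff : PowerSeries k →+* k) = (X + 1) ^ s) :
    IsUnit h₁.leadingCoeff ∧
    (∀ n < h₁.natDegree, h₁.coeff n ∈ Ideal.span {(PowerSeries.X : PowerSeries k)}) ∧
    h₁.coeff 0 ∈ Ideal.span {(PowerSeries.X : PowerSeries k)} ∧
    h₁.coeff 0 ∉ (Ideal.span {(PowerSeries.X : PowerSeries k)}) ^ 2 := by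
  have h3p : 3 * p ≤ d := hd ▸ Nat.mul_le_mul_right p ha
  have hdeg : d - p - s ≠ 0 := by omega
  have hX : PowerSeries.X = g.coeff 0 * h₁.coeff 0 * h₂.coeff 0 := by
    rw [← mul_coeff_zero, ← mul_coeff_zero, ← hf,
      coeff_zero_C_mul_one_add_X_pow_mul_sub_X_pow_mul _ (by omega) hdeg]
  have hg₀ : IsUnit (g.coeff 0) :=
    isUnit_coeff_of_isUnit_coeff_map_constantCoeff (by simp [hg])
  have hh₂₀ : IsUnit (h₂.coeff 0) :=
    isUnit_coeff_of_isUnit_coeff_map_constantCoeff (by simp [hh₂, coeff_zero_eq_eval_zero])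
  have hassoc : Associated (h₁.coeff 0) PowerSeries.X := by
    rw [show PowerSeries.X = h₁.coeff 0 * (g.coeff 0 * h₂.coeff 0) by rw [hX]; ring]
    exact associated_mul_unit_right _ _ (hg₀.mul hh₂₀)
  refine ⟨?_, fun n hn => coeff_mem_span_X_of_map_constantCoeff_eq_X_pow hh₁ (by omega),
    coeff_mem_span_X_of_map_constantCoeff_eq_X_pow hh₁ (Ne.symm hdeg),
    notMem_span_singleton_sq_of_associated PowerSeries.X_ne_zero PowerSeries.X_prime.not_isUnit
      hassoc⟩
  exact isUnit_coeff_of_isUnit_coeff_map_constantCoeff (by simp [hh₁, hh₁deg])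

/-- With `f(y) = x₀(1 + y^{d-s}(y+1)^s) - y^{d-p-s}(y+1)^s ∈ k[[x₀]][y]` and a
Hensel factorization `f = g·h₁·h₂` with `g ≡ -1`, `h₁ ≡ y^{d-p-s}`,
`h₂ ≡ (y+1)^s (mod x₀)` of the indicated degrees, the factor `h₁` is Eisenstein
at `(x₀)`: its leading coefficient is a unit, all lower coefficients lie in
`(x₀)`, and its constant coefficient has `x₀`-valuation exactly `1`. -/
theorem hensel_factor_eisenstein (p a d s : ℕ) (hp : p.Prime) (hodd : Odd p)
    (ha : 3 ≤ a) (hd : d = a * p) (hs1 : 1 ≤ s) (hs2 : s ≤ p - 1)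
    (k : Type*) [Field k] [IsAlgClosed k] [CharP k p]
    (g h₁ h₂ : Polynomial (PowerSeries k))
    (hf : (C PowerSeries.X * (1 + X ^ (d - s) * (X + 1) ^ s) -
        X ^ (d - p - s) * (X + 1) ^ s : Polynomial (PowerSeries k)) = g * h₁ * h₂)
    (hg : g.map (PowerSeries.constantCoeff : PowerSeries k →+* k) = -1) (hgdeg : g.natDegree = p)
    (hh₁ : h₁.map (PowerSeries.constantCoeff : PowerSeries k →+* k) = X ^ (d - p - s))
    (hh₁deg : h₁.natDegree = d - p - s)
    (hh₂ : h₂.map (PowerSeries.constantCoeff : PowerSeries k →+* k) = (X + 1) ^ s)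
    (hh₂deg : h₂.natDegree = s) :
    IsUnit h₁.leadingCoeff ∧
    (∀ n < h₁.natDegree, h₁.coeff n ∈ Ideal.span {(PowerSeries.X : PowerSeries k)}) ∧
    h₁.coeff 0 ∈ Ideal.span {(PowerSeries.X : PowerSeries k)} ∧
    h₁.coeff 0 ∉ (Ideal.span {(PowerSeries.X : PowerSeries k)}) ^ 2 :=
  hensel_factor_eisenstein_general p a d s ha hd hs1 hs2 k g h₁ h₂ hf hg hh₁ hh₁deg hh₂
end
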